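/- Let D ≥ 1 and v ∈ ℝ^D with all components nonzero. The surrogate loss S(σ) = ‖σ − v⊙v‖₂² = Σ_{i=1}^D (σ_i − v_i²)² on (0,∞)^D is uniquely minimized at σ = (v₁², …, v_D²), and this minimizer coincides with the unique global minimizer of the original loss L(σ) = (1/2)·Σᵢ v_i²/σ_i + (1/2)·Σᵢ log σ_i + (D/2)·log(2π); at this common minimizer, Σᵢ σ_i = ‖v‖₂². -/
import Mathlib


open Real Finset

lemma key_lem (x a : ℝ) (hx : 0 < x) (ha : 0 < a) (hne : a ≠ x) :
    1 + Real.log x < x / a + Real.log a := by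
  have hxa : 0 < x / a := div_pos hx ha
  have hne1 : x / a ≠ 1 := by
    intro h
    exact hne ((div_eq_one_iff_eq ha.ne').mp h).symm
  have := Real.log_lt_sub_one_of_pos hxa hne1
  rw [Real.log_div hx.ne' ha.ne'] at this
  linarith

/-- The surrogate loss `S(σ) = ‖σ − v⊙v‖₂² = Σ (σ_i − v_i²)²` on `(0,∞)^D`
is uniquely minimized at `σ = (v₁², …, v_D²)`, this minimizer coincides with the unique
global minimizer of the original loss
`L(σ) = (1/2)·Σ v_i²/σ_i + (1/2)·Σ log σ_i + (D/2)·log(2π)`, and at this common minimizer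
`Σ σ_i = ‖v‖₂²`. -/
theorem stmt_10 (D : ℕ) (hD : 1 ≤ D) (v : Fin D → ℝ) (hv : ∀ i, v i ≠ 0)
    (S L : (Fin D → ℝ) → ℝ)
    (hS : ∀ σ : Fin D → ℝ, S σ = ∑ i, (σ i - (v i) ^ 2) ^ 2)
    (hL : ∀ σ : Fin D → ℝ,
      L σ = (1 / 2) * ∑ i, (v i) ^ 2 / σ i + (1 / 2) * ∑ i, Real.log (σ i)
        + ((D : ℝ) / 2) * Real.log (2 * π)) :
    (∀ σ : Fin D → ℝ, (∀ i, 0 < σ i) → σ ≠ (fun i => (v i) ^ 2) →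
      S (fun i => (v i) ^ 2) < S σ) ∧
    (∀ σ : Fin D → ℝ, (∀ i, 0 < σ i) → σ ≠ (fun i => (v i) ^ 2) →
      L (fun i => (v i) ^ 2) < L σ) ∧
    ∑ i, (fun i => (v i) ^ 2) i = ∑ i, (v i) ^ 2 := by
  have hv2 : ∀ i, 0 < (v i) ^ 2 := fun i => pow_pos (abs_pos.mpr (hv i)) 2 |>.trans_le (by rw [sq_abs])
  refine ⟨?_, ?_, rfl⟩
  · intro σ hσ hne
    rw [hS, hS]
    have h0 : ∑ i, (((v i)^2 : ℝ) - (v i)^2)^2 = 0 := by simp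
    rw [h0]
    have hj : ∃ j, σ j ≠ (v j) ^ 2 := by
      by_contra h
      push_neg at h
      exact hne (funext h)
    obtain ⟨j, hj⟩ := hj
    have : (0:ℝ) < (σ j - (v j)^2)^2 := pow_pos (abs_pos.mpr (sub_ne_zero.mpr hj)) 2 |>.trans_le (by rw [sq_abs])
    calc (0:ℝ) < (σ j - (v j)^2)^2 := this
      _ ≤ ∑ i, (σ i - (v i)^2)^2 :=
        Finset.single_le_sum (f := fun i => (σ i - (v i)^2)^2) (fun i _ => sq_nonneg _) (Finset.mem_univ j)
  · intro σ hσ hne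
    rw [hL, hL]
    have hj : ∃ j, σ j ≠ (v j) ^ 2 := by
      by_contra h
      push_neg at h
      exact hne (funext h)
    obtain ⟨j, hj⟩ := hj
    have key : ∑ i, ((v i)^2 / (v i)^2 + Real.log ((v i)^2))
        < ∑ i, ((v i)^2 / σ i + Real.log (σ i)) := by
      apply Finset.sum_lt_sum
      · intro i _
        rcases eq_or_ne (σ i) ((v i)^2) with h | h
        · simp [h]
        · have := key_lem ((v i)^2) (σ i) (hv2 i) (hσ i) h
          have hd : (v i)^2 / (v i)^2 = 1 := div_self (hv2 i).ne'
          rw [hd]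
          linarith
      · refine ⟨j, Finset.mem_univ j, ?_⟩
        have := key_lem ((v j)^2) (σ j) (hv2 j) (hσ j) hj
        have hd : (v j)^2 / (v j)^2 = 1 := div_self (hv2 j).ne'
        rw [hd]
        linarith
    simp only [Finset.sum_add_distrib] at key
    linarith
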